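/- Let R be a real Gaussian random variable with mean μ_R and variance σ_R² > 0, and let ς > 0. Then the unconditional pairwise error probability satisfies E[ Q( √(R² / (2ς)) ) ] = (1/π) ∫_0^{π/2} √( 2ς sin² ϑ / (2ς sin² ϑ + σ_R²) ) · exp( −μ_R² / (4ς sin² ϑ + 2σ_R²) ) dϑ. -/

import Mathlib

/-!
Craig's formula `Q(x) = (1/π) ∫_0^{π/2} exp (-x² / (2 sin² θ))` for `x ≥ 0` writes
`Q(√(R² / (2ς)))` as an average over `θ` of `exp (-R² / (2d))` with `d = 2ς sin² θ`. This kernel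
is bounded by `1`, so Fubini moves the Gaussian expectation inside, and completing the square gives
`E[exp (-R² / (2d))] = √(d / (d + σ²)) exp (-μ² / (2 (d + σ²)))`.

Craig's formula itself: both sides equal `1/2` at `x = 0`, and for `x > 0` both have derivative
minus the standard normal density; on the right this follows by differentiating under the
integral sign and substituting `θ = arctan (x / t)`.
-/

open MeasureTheory ProbabilityTheory Real

/-- The Gaussian tail function Q(x) = ∫_x^∞ (1/√(2π)) e^{-t²/2} dt. -/
noncomputable def gaussQ (x : ℝ) : ℝ :=
  ∫ t in Set.Ioi x, (1 / Real.sqrt (2*π)) * Real.exp (-t^2/2)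

open Set Filter intervalIntegral
open scoped NNReal Interval

lemma integral_exp_neg_sq_div_gaussianReal (μ : ℝ) (v : ℝ≥0) {d : ℝ} (hd : 0 < d) :
    ∫ r, exp (-r ^ 2 / (2 * d)) ∂gaussianReal μ v
      = √(d / (d + v)) * exp (-μ ^ 2 / (2 * (d + v))) := by
  rcases eq_or_ne v 0 with rfl | hv
  · simp [gaussianReal_zero_var, hd.ne']
  set b : ℝ := (d + v) / (2 * d * v)
  set c : ℝ := μ * d / (d + v)
  have complete_square : ∀ r : ℝ, gaussianPDFReal μ v r • exp (-r ^ 2 / (2 * d))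
      = ((√(2 * π * v))⁻¹ * exp (-μ ^ 2 / (2 * (d + v)))) * exp (-b * (r - c) ^ 2) := by
    intro r
    rw [gaussianPDFReal, smul_eq_mul, mul_assoc, ← exp_add, mul_assoc _ (exp _), ← exp_add]
    congr 2
    simp only [b, c]
    field_simp
    ring
  rw [integral_gaussianReal_eq_integral_smul hv]
  simp_rw [complete_square]
  rw [MeasureTheory.integral_const_mul, integral_sub_right_eq_self (fun r => exp (-b * r ^ 2)) c,
    integral_gaussian]
  calc (√(2 * π * v))⁻¹ * exp (-μ ^ 2 / (2 * (d + v))) * √(π / b)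
      = √(π / b / (2 * π * v)) * exp (-μ ^ 2 / (2 * (d + v))) := by
        rw [sqrt_div' _ (by positivity : (0:ℝ) ≤ 2 * π * v)]; ring
    _ = _ := by
        congr 2
        simp only [b]
        field_simp

lemma gaussQ_eq_setIntegral_gaussianPDFReal (x : ℝ) :
    gaussQ x = ∫ t in Ioi x, gaussianPDFReal 0 1 t := by
  simp [gaussQ, gaussianPDFReal, one_div]

lemma gaussQ_zero : gaussQ 0 = 1 / 2 := by
  have h : ∀ t : ℝ, exp (-t ^ 2 / 2) = exp (-(1 / 2) * t ^ 2) := fun t => by ring_nf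
  simp_rw [gaussQ, h]
  rw [MeasureTheory.integral_const_mul, integral_gaussian_Ioi, div_div_eq_mul_div, div_one,
    mul_comm 2 π]
  field_simp

lemma hasDerivAt_gaussQ (x : ℝ) : HasDerivAt gaussQ (-gaussianPDFReal 0 1 x) x := by
  have hφ := integrable_gaussianPDFReal 0 1
  have hφc : Continuous (gaussianPDFReal 0 1) := by unfold gaussianPDFReal; fun_prop
  have h : gaussQ = fun y =>
      (∫ t in Ioi 0, gaussianPDFReal 0 1 t) - ∫ t in 0..y, gaussianPDFReal 0 1 t := by
    ext y
    rw [gaussQ_eq_setIntegral_gaussianPDFReal,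
      ← integral_Ioi_sub_Ioi' hφ.integrableOn hφ.integrableOn]
    ring
  rw [h]
  exact (integral_hasDerivAt_right hφ.intervalIntegrable
    hφc.aestronglyMeasurable.stronglyMeasurableAtFilter hφc.continuousAt).const_sub _

lemma image_arctan_div_Ioi {x : ℝ} (hx : 0 < x) :
    (fun t => arctan (x / t)) '' Ioi 0 = Ioo 0 (π / 2) := by
  ext θ
  constructor
  · rintro ⟨t, ht, rfl⟩
    exact ⟨arctan_zero ▸ arctan_strictMono (div_pos hx ht), arctan_lt_pi_div_two _⟩
  · rintro ⟨hθ₀, hθ₁⟩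
    have htan : 0 < tan θ := tan_pos_of_pos_of_lt_pi_div_two hθ₀ hθ₁
    refine ⟨x / tan θ, div_pos hx htan, ?_⟩
    simp only [div_div_cancel₀ hx.ne', arctan_tan (by linarith [pi_div_two_pos]) hθ₁]

lemma hasDerivAt_arctan_div {x t : ℝ} (ht : t ≠ 0) :
    HasDerivAt (fun t => arctan (x / t)) (-x / (x ^ 2 + t ^ 2)) t := by
  have h : HasDerivAt (fun t => arctan (x * t⁻¹))
      (1 / (1 + (x * t⁻¹) ^ 2) * (x * -(t ^ 2)⁻¹)) t :=
    (hasDerivAt_arctan _).comp t ((hasDerivAt_inv ht).const_mul x)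
  simp only [← div_eq_mul_inv] at h
  convert h using 1
  field_simp
  ring

lemma sin_arctan_div_sq (x : ℝ) {t : ℝ} (ht : t ≠ 0) :
    sin (arctan (x / t)) ^ 2 = x ^ 2 / (x ^ 2 + t ^ 2) := by
  rw [sin_arctan, div_pow, sq_sqrt (by positivity)]
  field_simp
  ring

lemma integral_Ioo_div_sin_sq_mul_exp {x : ℝ} (hx : 0 < x) :
    ∫ θ in Ioo 0 (π / 2), x / sin θ ^ 2 * exp (-x ^ 2 / (2 * sin θ ^ 2))
      = π * gaussianPDFReal 0 1 x := by
  have hinj : InjOn (fun t => arctan (x / t)) (Ioi 0) := by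
    intro a ha b hb hab
    have h : x / a = x / b := arctan_injective hab
    rw [div_eq_div_iff (ne_of_gt ha) (ne_of_gt hb)] at h
    exact mul_left_cancel₀ hx.ne' (by linarith)
  rw [← image_arctan_div_Ioi hx, integral_image_eq_integral_abs_deriv_smul measurableSet_Ioi
    (fun t ht => (hasDerivAt_arctan_div (x := x) (ne_of_gt ht)).hasDerivWithinAt) hinj]
  have hpt : ∀ t ∈ Ioi (0 : ℝ), |-x / (x ^ 2 + t ^ 2)| • (x / sin (arctan (x / t)) ^ 2
      * exp (-x ^ 2 / (2 * sin (arctan (x / t)) ^ 2)))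
        = exp (-x ^ 2 / 2) * exp (-(1 / 2) * t ^ 2) := by
    intro t ht
    have ht : 0 < t := ht
    rw [sin_arctan_div_sq x ht.ne', abs_div, abs_neg, abs_of_pos hx, abs_of_pos (by positivity),
      smul_eq_mul, ← exp_add]
    field_simp
    ring_nf
  rw [setIntegral_congr_fun measurableSet_Ioi hpt, MeasureTheory.integral_const_mul,
    integral_gaussian_Ioi, gaussianPDFReal, show π / (1 / 2) = 2 * π by ring, NNReal.coe_one,
    mul_one, sub_zero, mul_one]
  field_simp
  exact sq_sqrt (by positivity)

noncomputable def craigQ (x : ℝ) : ℝ :=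
  (1 / π) * ∫ θ in 0..π / 2, exp (-x ^ 2 / (2 * sin θ ^ 2))

lemma exp_neg_sq_div_le_one {c : ℝ} (hc : 0 ≤ c) (x : ℝ) : exp (-x ^ 2 / c) ≤ 1 :=
  exp_le_one_iff.mpr (div_nonpos_of_nonpos_of_nonneg (neg_nonpos.mpr (sq_nonneg x)) hc)

lemma measurable_exp_neg_sq_div_sin_sq (x : ℝ) :
    Measurable fun θ => exp (-x ^ 2 / (2 * sin θ ^ 2)) := by
  fun_prop

lemma norm_exp_neg_sq_div_sin_sq_le_one (x θ : ℝ) : ‖exp (-x ^ 2 / (2 * sin θ ^ 2))‖ ≤ 1 := by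
  rw [norm_of_nonneg (exp_pos _).le]
  exact exp_neg_sq_div_le_one (by positivity) x

lemma continuous_craigQ : Continuous craigQ := by
  refine continuous_const.mul (continuous_of_dominated_interval (bound := fun _ => 1)
    (fun x => (measurable_exp_neg_sq_div_sin_sq x).aestronglyMeasurable)
    (fun x => ae_of_all _ fun θ _ => norm_exp_neg_sq_div_sin_sq_le_one x θ)
    intervalIntegrable_const (ae_of_all _ fun θ _ => by fun_prop))

lemma craigQ_zero : craigQ 0 = 1 / 2 := by
  simp only [craigQ, zero_pow two_ne_zero, neg_zero, zero_div, exp_zero,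
    intervalIntegral.integral_const, sub_zero, smul_eq_mul, mul_one]
  field_simp

lemma hasDerivAt_exp_neg_sq_div {s : ℝ} (hs : s ≠ 0) (x : ℝ) :
    HasDerivAt (fun x => exp (-x ^ 2 / (2 * s))) (-(x / s * exp (-x ^ 2 / (2 * s)))) x := by
  have h : HasDerivAt (fun x => -x ^ 2 / (2 * s)) (-(2 * x ^ (2 - 1)) / (2 * s)) x :=
    (hasDerivAt_pow 2 x).neg.div_const (2 * s)
  convert h.exp using 1
  field_simp
  ring

lemma div_mul_exp_neg_sq_div_le {y s : ℝ} (hy : 0 < y) (hs : 0 < s) :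
    y / s * exp (-y ^ 2 / (2 * s)) ≤ 2 / y := by
  set u := y ^ 2 / (2 * s)
  have hu : u * exp (-u) ≤ 1 := by
    rw [exp_neg, ← div_eq_mul_inv, div_le_one (exp_pos u)]
    linarith [add_one_le_exp u]
  calc y / s * exp (-y ^ 2 / (2 * s)) = 2 / y * (u * exp (-u)) := by
        simp only [u, neg_div]; field_simp
    _ ≤ 2 / y := mul_le_of_le_one_right (by positivity) hu

lemma sin_sq_pos_of_mem_uIoc {θ : ℝ} (hθ : θ ∈ Ι 0 (π / 2)) : 0 < sin θ ^ 2 := by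
  rw [uIoc_of_le (by positivity)] at hθ
  have := sin_pos_of_pos_of_lt_pi hθ.1 (by linarith [hθ.2, pi_pos])
  positivity

lemma hasDerivAt_craigQ {x : ℝ} (hx : 0 < x) : HasDerivAt craigQ (-gaussianPDFReal 0 1 x) x := by
  have hball : ∀ y ∈ Metric.ball x (x / 2), x / 2 < y := fun y hy => by
    linarith [(abs_lt.mp (Real.dist_eq y x ▸ Metric.mem_ball.mp hy)).1]
  obtain ⟨-, hderiv⟩ := intervalIntegral.hasDerivAt_integral_of_dominated_loc_of_deriv_le
    (a := 0) (b := π / 2) (μ := volume) (bound := fun _ => 4 / x)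
    (F' := fun y θ => -(y / sin θ ^ 2 * exp (-y ^ 2 / (2 * sin θ ^ 2))))
    (Metric.ball_mem_nhds x (half_pos hx))
    (Eventually.of_forall fun y => (measurable_exp_neg_sq_div_sin_sq y).aestronglyMeasurable)
    ((intervalIntegrable_const (c := (1 : ℝ))).mono_fun
      (measurable_exp_neg_sq_div_sin_sq x).aestronglyMeasurable
      (ae_of_all _ fun θ => by simpa using norm_exp_neg_sq_div_sin_sq_le_one x θ))
    (by fun_prop)
    (ae_of_all _ fun θ hθ y hy => by
      have hy₀ : 0 < y := by linarith [hball y hy]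
      rw [norm_neg, norm_of_nonneg (by have := sin_sq_pos_of_mem_uIoc hθ; positivity)]
      calc _ ≤ 2 / y := div_mul_exp_neg_sq_div_le hy₀ (sin_sq_pos_of_mem_uIoc hθ)
        _ ≤ 4 / x := by rw [div_le_div_iff₀ hy₀ hx]; linarith [hball y hy])
    intervalIntegrable_const
    (ae_of_all _ fun θ hθ y _ => hasDerivAt_exp_neg_sq_div (sin_sq_pos_of_mem_uIoc hθ).ne' y)
  refine (hderiv.const_mul (1 / π)).congr_deriv ?_
  rw [intervalIntegral.integral_neg, integral_of_le (by positivity), integral_Ioc_eq_integral_Ioo,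
    integral_Ioo_div_sin_sq_mul_exp hx]
  field_simp

lemma continuous_gaussQ : Continuous gaussQ :=
  continuous_iff_continuousAt.mpr fun x => (hasDerivAt_gaussQ x).continuousAt

lemma gaussQ_eq_craigQ {x : ℝ} (hx : 0 ≤ x) : gaussQ x = craigQ x := by
  rcases hx.eq_or_lt with rfl | hx
  · rw [gaussQ_zero, craigQ_zero]
  obtain ⟨c, -, hslope⟩ := exists_hasDerivAt_eq_slope (gaussQ - craigQ) (fun _ => 0) hx
    (continuous_gaussQ.sub continuous_craigQ).continuousOn
    (fun y hy => by simpa using (hasDerivAt_gaussQ y).sub (hasDerivAt_craigQ hy.1))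
  rw [eq_comm, div_eq_zero_iff, sub_zero, or_iff_left hx.ne', Pi.sub_apply, Pi.sub_apply,
    gaussQ_zero, craigQ_zero, sub_self, sub_zero, sub_eq_zero] at hslope
  exact hslope

lemma gaussQ_sqrt_sq_div {ς : ℝ} (hς : 0 ≤ ς) (r : ℝ) :
    gaussQ √(r ^ 2 / (2 * ς))
      = (1 / π) * ∫ θ in 0..π / 2, exp (-r ^ 2 / (2 * (2 * ς * sin θ ^ 2))) := by
  rw [gaussQ_eq_craigQ (sqrt_nonneg _), craigQ, sq_sqrt (by positivity)]
  congr 2 with θ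
  ring_nf

lemma integrable_exp_neg_sq_div_sin_sq {ς : ℝ} (hς : 0 ≤ ς) (ν : Measure ℝ) [IsFiniteMeasure ν]
    (a b : ℝ) :
    Integrable (Function.uncurry fun θ r => exp (-r ^ 2 / (2 * (2 * ς * sin θ ^ 2))))
      ((volume.restrict (Ι a b)).prod ν) := by
  have : IsFiniteMeasure (volume.restrict (Ι a b)) := isFiniteMeasure_restrict_Ioc _ _
  refine Integrable.of_bound (Measurable.aestronglyMeasurable (by fun_prop)) 1
    (ae_of_all _ fun ⟨θ, r⟩ => ?_)
  rw [Function.uncurry_apply_pair, norm_of_nonneg (exp_pos _).le]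
  exact exp_neg_sq_div_le_one (by positivity) _

theorem upep_integral_form_general
    (μ : ℝ) (v : NNReal) (ς : ℝ) (hς : 0 < ς) :
    ∫ r, gaussQ (Real.sqrt (r^2 / (2*ς))) ∂(gaussianReal μ v)
      = (1/π) * ∫ ϑ in (0:ℝ)..(π/2),
          Real.sqrt (2 * ς * Real.sin ϑ ^ 2 / (2 * ς * Real.sin ϑ ^ 2 + (v : ℝ)))
            * Real.exp (-μ^2 / (4 * ς * Real.sin ϑ ^ 2 + 2 * (v : ℝ))) := by
  simp_rw [gaussQ_sqrt_sq_div hς.le]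
  rw [MeasureTheory.integral_const_mul,
    ← intervalIntegral_integral_swap (integrable_exp_neg_sq_div_sin_sq hς.le _ _ _)]
  refine congrArg _ (integral_congr_ae (ae_of_all _ fun θ hθ => ?_))
  have hd : 0 < 2 * ς * sin θ ^ 2 := by have := sin_sq_pos_of_mem_uIoc hθ; positivity
  rw [integral_exp_neg_sq_div_gaussianReal μ v hd,
    show 2 * (2 * ς * sin θ ^ 2 + v) = 4 * ς * sin θ ^ 2 + 2 * v by ring]

/-- Unconditional pairwise error probability: for R a real Gaussian with mean μ_R and
variance σ_R² > 0 and any ς > 0,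
E[Q(√(R²/(2ς)))] = (1/π) ∫_0^{π/2} √(2ς sin²ϑ / (2ς sin²ϑ + σ_R²))
  · exp(-μ_R² / (4ς sin²ϑ + 2σ_R²)) dϑ. -/
theorem upep_integral_form
    (μ : ℝ) (v : NNReal) (hv : 0 < v) (ς : ℝ) (hς : 0 < ς) :
    ∫ r, gaussQ (Real.sqrt (r^2 / (2*ς))) ∂(gaussianReal μ v)
      = (1/π) * ∫ ϑ in (0:ℝ)..(π/2),
          Real.sqrt (2 * ς * Real.sin ϑ ^ 2 / (2 * ς * Real.sin ϑ ^ 2 + (v : ℝ)))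
            * Real.exp (-μ^2 / (4 * ς * Real.sin ϑ ^ 2 + 2 * (v : ℝ))) :=
  upep_integral_form_general μ v ς hς
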